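/- arXiv:2003.10191 — 2 statements merged into one kernel-verified Lean document; each statement's English description precedes it below -/
import Mathlib

section
/- Let f(x) = (x−1)^6 and g(x) = (x²+x+1)(x⁴+1), let A, B ∈ GL₆(ℤ) be their companion matrices, and let v = (A⁻¹B − I)(e₆). Then v = (−7, 14, −20, 14, −7, 0), and the matrix γ = A·B⁵ satisfies: the coefficient of e₆ in γ(v) lies in {1, −1, 2, −2}, and the three vectors v, γ(v), γ⁻¹(v) are linearly independent over ℚ. -/
open Matrix Polynomial

/-- The companion matrix of a monic polynomial `p` of degree `n`: it sends
`e_i ↦ e_{i+1}` for `1 ≤ i ≤ n-1` (zero-indexed: column `j` is `e_{j+1}` when `j+1 < n`),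
and `e_n ↦ -(c_0 e_1 + c_1 e_2 + ⋯ + c_{n-1} e_n)`. -/
def companionMat (n : ℕ) (p : Polynomial ℤ) : Matrix (Fin n) (Fin n) ℤ :=
  Matrix.of fun i j =>
    if (j : ℕ) + 1 < n then (if (i : ℕ) = (j : ℕ) + 1 then 1 else 0) else -p.coeff (i : ℕ)

/-!
Everything is an explicit integer computation once the companion matrices are written out.
The inverses never need to be computed: `A⁻¹ (B e₆) = w` and `γ⁻¹ v = w` are certified by
checking `A w = B e₆` and `γ w = v`. Linear independence over `ℚ` follows from a nonzero
`3 × 3` minor of the integer matrix with rows `v, γ v, γ⁻¹ v`.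
-/

theorem companionMat_six (p : ℤ[X]) :
    companionMat 6 p =
      !![0, 0, 0, 0, 0, -p.coeff 0;
         1, 0, 0, 0, 0, -p.coeff 1;
         0, 1, 0, 0, 0, -p.coeff 2;
         0, 0, 1, 0, 0, -p.coeff 3;
         0, 0, 0, 1, 0, -p.coeff 4;
         0, 0, 0, 0, 1, -p.coeff 5] := by
  ext i j
  fin_cases i <;> fin_cases j <;> rfl

theorem companionMat_X_sub_one_pow_six :
    companionMat 6 ((X - 1) ^ 6) =
      !![0, 0, 0, 0, 0, -1;
         1, 0, 0, 0, 0, 6;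
         0, 1, 0, 0, 0, -15;
         0, 0, 1, 0, 0, 20;
         0, 0, 0, 1, 0, -15;
         0, 0, 0, 0, 1, 6] := by
  rw [companionMat_six, sub_eq_add_neg, ← C_1, ← C_neg]
  simp only [coeff_X_add_C_pow]
  norm_num [Nat.choose]

theorem companionMat_cyclotomic_three_mul_cyclotomic_eight :
    companionMat 6 ((X ^ 2 + X + 1) * (X ^ 4 + 1)) =
      !![0, 0, 0, 0, 0, -1;
         1, 0, 0, 0, 0, -1;
         0, 1, 0, 0, 0, -1;
         0, 0, 1, 0, 0, 0;
         0, 0, 0, 1, 0, -1;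
         0, 0, 0, 0, 1, -1] := by
  have expand : ((X ^ 2 + X + 1) * (X ^ 4 + 1) : ℤ[X]) =
      X ^ 6 + X ^ 5 + X ^ 4 + X ^ 2 + X + 1 := by ring
  rw [companionMat_six, expand]
  simp [coeff_X_pow, coeff_X, coeff_one]

theorem Matrix.GeneralLinearGroup.inv_mulVec_eq {n R : Type*} [Fintype n] [DecidableEq n]
    [CommRing R] (U : GL n R) {v w : n → R} (h : (U : Matrix n n R) *ᵥ w = v) :
    (↑U⁻¹ : Matrix n n R) *ᵥ v = w := by
  rw [← h, mulVec_mulVec, ← Units.val_mul, inv_mul_cancel, Units.val_one, one_mulVec]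

theorem linearIndependent_intCast_of_det_submatrix_ne_zero {m n K : Type*} [Fintype m]
    [DecidableEq m] [Field K] [CharZero K] (M : Matrix m n ℤ) (e : m → n)
    (h : (M.submatrix id e).det ≠ 0) :
    LinearIndependent K fun i j => (M i j : K) := by
  refine LinearIndependent.of_comp (LinearMap.funLeft K K e) ?_
  refine linearIndependent_rows_of_det_ne_zero
    (A := (M.submatrix id e).map (Int.cast : ℤ → K)) ?_
  rwa [← Int.cast_det, Int.cast_ne_zero]

/-- for γ = AB⁵ the coefficient of e₆ in γ(v) lies in {1, -1, 2, -2} and v, γ(v), γ⁻¹(v) are linearly independent over ℚ. -/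
theorem entry22_certificate (f g : Polynomial ℤ)
    (hf : f = (Polynomial.X - 1) ^ 6)
    (hg : g = (Polynomial.X ^ 2 + Polynomial.X + 1) * (Polynomial.X ^ 4 + 1))
    (A B : GL (Fin 6) ℤ)
    (hA : (A : Matrix (Fin 6) (Fin 6) ℤ) = companionMat 6 f)
    (hB : (B : Matrix (Fin 6) (Fin 6) ℤ) = companionMat 6 g)
    (v : Fin 6 → ℤ)
    (hv : v = ((A⁻¹ * B : GL (Fin 6) ℤ) : Matrix (Fin 6) (Fin 6) ℤ) *ᵥ
      Pi.single (5 : Fin 6) 1 - Pi.single (5 : Fin 6) 1)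
    (γ : GL (Fin 6) ℤ) (hγ : γ = A * B ^ 5) :
    v = ![-7, 14, -20, 14, -7, 0] ∧
    ((γ : Matrix (Fin 6) (Fin 6) ℤ) *ᵥ v) 5 ∈ ({1, -1, 2, -2} : Set ℤ) ∧
    LinearIndependent ℚ
      ![(fun i => (v i : ℚ)),
        (fun i => (((γ : Matrix (Fin 6) (Fin 6) ℤ) *ᵥ v) i : ℚ)),
        (fun i => (((↑γ⁻¹ : Matrix (Fin 6) (Fin 6) ℤ) *ᵥ v) i : ℚ))] := by
  rw [hf, companionMat_X_sub_one_pow_six] at hA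
  rw [hg, companionMat_cyclotomic_three_mul_cyclotomic_eight] at hB
  have hAinvB : (↑A⁻¹ : Matrix (Fin 6) (Fin 6) ℤ) *ᵥ
      ((B : Matrix (Fin 6) (Fin 6) ℤ) *ᵥ Pi.single (5 : Fin 6) 1) = ![-7, 14, -20, 14, -7, 1] :=
    A.inv_mulVec_eq (by rw [hA, hB]; decide)
  have hv_eq : v = ![-7, 14, -20, 14, -7, 0] := by
    rw [hv, Units.val_mul, ← mulVec_mulVec, hAinvB]
    decide
  have hγ' : (γ : Matrix (Fin 6) (Fin 6) ℤ) =
      (A : Matrix (Fin 6) (Fin 6) ℤ) * (B : Matrix (Fin 6) (Fin 6) ℤ) ^ 5 := by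
    rw [hγ, Units.val_mul, Units.val_pow_eq_pow_val]
  have hγv : (γ : Matrix (Fin 6) (Fin 6) ℤ) *ᵥ v = ![-7, 15, -98, 126, -85, 1] := by
    rw [hγ', hA, hB, hv_eq]
    decide
  have hγinvv :
      (↑γ⁻¹ : Matrix (Fin 6) (Fin 6) ℤ) *ᵥ v = ![-275, 125, -98, 14, -197, -1] :=
    γ.inv_mulVec_eq (by rw [hγ', hA, hB, hv_eq]; decide)
  refine ⟨hv_eq, by simp [hγv], ?_⟩
  convert linearIndependent_intCast_of_det_submatrix_ne_zero (K := ℚ)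
    ![v, (γ : Matrix (Fin 6) (Fin 6) ℤ) *ᵥ v, (↑γ⁻¹ : Matrix (Fin 6) (Fin 6) ℤ) *ᵥ v]
    (Fin.castLE (by norm_num)) ?_ using 1
  · ext r j
    fin_cases r <;> rfl
  · rfl
  · rw [hγv, hγinvv, hv_eq, det_fin_three]
    decide
end

section
/- Let f(x) = (x−1)^6 and g(x) = (x²−x+1)(x⁴−x²+1), let A, B ∈ GL₆(ℤ) be their companion matrices, and let v = (A⁻¹B − I)(e₆). Then v = (−5, 15, −21, 15, −5, 0), and the matrix γ = B·A⁻¹·B⁶·A·B⁻⁵ satisfies: the coefficient of e₆ in γ(v) lies in {1, −1, 2, −2}, and the three vectors v, γ(v), γ⁻¹(v) are linearly independent over ℚ. -/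
open Matrix Polynomial

private def MA : Matrix (Fin 6) (Fin 6) ℤ :=
  !![0,0,0,0,0,-1; 1,0,0,0,0,6; 0,1,0,0,0,-15; 0,0,1,0,0,20; 0,0,0,1,0,-15; 0,0,0,0,1,6]
private def MAi : Matrix (Fin 6) (Fin 6) ℤ :=
  !![6,1,0,0,0,0; -15,0,1,0,0,0; 20,0,0,1,0,0; -15,0,0,0,1,0; 6,0,0,0,0,1; -1,0,0,0,0,0]
private def MB : Matrix (Fin 6) (Fin 6) ℤ :=
  !![0,0,0,0,0,-1; 1,0,0,0,0,1; 0,1,0,0,0,0; 0,0,1,0,0,-1; 0,0,0,1,0,0; 0,0,0,0,1,1]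
private def MBi : Matrix (Fin 6) (Fin 6) ℤ :=
  !![1,1,0,0,0,0; 0,0,1,0,0,0; -1,0,0,1,0,0; 0,0,0,0,1,0; 1,0,0,0,0,1; -1,0,0,0,0,0]
private def Mg : Matrix (Fin 6) (Fin 6) ℤ :=
  !![0,0,0,0,-1,-1; -6,0,6,6,2,-5; 16,0,-15,-15,0,16; -20,1,20,20,-2,-22; 15,0,-14,-15,0,14; -6,0,6,7,2,-4]
private def Mgi : Matrix (Fin 6) (Fin 6) ℤ :=
  !![2,-8,-8,0,9,9; -2,20,20,1,-20,-20; -2,-22,-21,0,22,21; 2,6,6,0,-6,-5; 1,7,6,0,-6,-6; -2,-7,-6,0,6,6]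

private lemma compA : companionMat 6 ((X - 1 : ℤ[X]) ^ 6) = MA := by
  have h : ((X - 1 : ℤ[X]) ^ 6)
      = X ^ 6 - 6 * X ^ 5 + 15 * X ^ 4 - 20 * X ^ 3 + 15 * X ^ 2 - 6 * X + 1 := by ring
  ext i j
  fin_cases i <;> fin_cases j <;>
    (try simp [companionMat, MA, h, coeff_one, coeff_X]) <;> decide

private lemma compB :
    companionMat 6 ((X ^ 2 - X + 1) * (X ^ 4 - X ^ 2 + 1) : ℤ[X]) = MB := by
  have h : ((X ^ 2 - X + 1) * (X ^ 4 - X ^ 2 + 1) : ℤ[X])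
      = X ^ 6 - X ^ 5 + X ^ 3 - X + 1 := by ring
  ext i j
  fin_cases i <;> fin_cases j <;>
    (try simp [companionMat, MB, h, coeff_one, coeff_X]) <;> decide

/-- for γ = BA⁻¹B⁶AB⁻⁵ the coefficient of e₆ in γ(v) lies in {1, -1, 2, -2} and v, γ(v), γ⁻¹(v) are linearly independent over ℚ. -/
theorem entry36_certificate (f g : Polynomial ℤ)
    (hf : f = (Polynomial.X - 1) ^ 6)
    (hg : g = (Polynomial.X ^ 2 - Polynomial.X + 1) * (Polynomial.X ^ 4 - Polynomial.X ^ 2 + 1))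
    (A B : GL (Fin 6) ℤ)
    (hA : (A : Matrix (Fin 6) (Fin 6) ℤ) = companionMat 6 f)
    (hB : (B : Matrix (Fin 6) (Fin 6) ℤ) = companionMat 6 g)
    (v : Fin 6 → ℤ)
    (hv : v = ((A⁻¹ * B : GL (Fin 6) ℤ) : Matrix (Fin 6) (Fin 6) ℤ) *ᵥ
      Pi.single (5 : Fin 6) 1 - Pi.single (5 : Fin 6) 1)
    (γ : GL (Fin 6) ℤ) (hγ : γ = B * A⁻¹ * B ^ 6 * A * B⁻¹ ^ 5) :
    v = ![-5, 15, -21, 15, -5, 0] ∧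
    ((γ : Matrix (Fin 6) (Fin 6) ℤ) *ᵥ v) 5 ∈ ({1, -1, 2, -2} : Set ℤ) ∧
    LinearIndependent ℚ
      ![(fun i => (v i : ℚ)),
        (fun i => (((γ : Matrix (Fin 6) (Fin 6) ℤ) *ᵥ v) i : ℚ)),
        (fun i => (((↑γ⁻¹ : Matrix (Fin 6) (Fin 6) ℤ) *ᵥ v) i : ℚ))] := by
  have hA6 : (A : Matrix (Fin 6) (Fin 6) ℤ) = MA := by rw [hA, hf, compA]
  have hB6 : (B : Matrix (Fin 6) (Fin 6) ℤ) = MB := by rw [hB, hg, compB]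
  have hAi : ((A⁻¹ : GL (Fin 6) ℤ) : Matrix (Fin 6) (Fin 6) ℤ) = MAi := by
    have h1 : MAi * (A : Matrix (Fin 6) (Fin 6) ℤ) = 1 := by rw [hA6]; decide
    rw [Matrix.coe_units_inv, Matrix.inv_eq_left_inv h1]
  have hBi : ((B⁻¹ : GL (Fin 6) ℤ) : Matrix (Fin 6) (Fin 6) ℤ) = MBi := by
    have h1 : MBi * (B : Matrix (Fin 6) (Fin 6) ℤ) = 1 := by rw [hB6]; decide
    rw [Matrix.coe_units_inv, Matrix.inv_eq_left_inv h1]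
  have hγm : (γ : Matrix (Fin 6) (Fin 6) ℤ) = Mg := by
    rw [hγ]
    simp only [Units.val_mul, Units.val_pow_eq_pow_val, hA6, hAi, hB6, hBi]
    decide
  have hγim : ((γ⁻¹ : GL (Fin 6) ℤ) : Matrix (Fin 6) (Fin 6) ℤ) = Mgi := by
    have h1 : Mgi * (γ : Matrix (Fin 6) (Fin 6) ℤ) = 1 := by rw [hγm]; decide
    rw [Matrix.coe_units_inv, Matrix.inv_eq_left_inv h1]
  have hv' : v = ![-5, 15, -21, 15, -5, 0] := by
    rw [hv]
    simp only [Units.val_mul, hAi, hB6]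
    decide
  have hgv : (γ : Matrix (Fin 6) (Fin 6) ℤ) *ᵥ v = ![5, -16, 10, 5, -6, -1] := by
    rw [hγm, hv']; decide
  have hgiv : ((γ⁻¹ : GL (Fin 6) ℤ) : Matrix (Fin 6) (Fin 6) ℤ) *ᵥ v
      = ![-7, 5, 11, -16, 4, 1] := by
    rw [hγim, hv']; decide
  refine ⟨hv', ?_, ?_⟩
  · simp only [Set.mem_insert_iff, Set.mem_singleton_iff, hgv]
    decide
  · rw [Fintype.linearIndependent_iff]
    intro c hc
    rw [hgv, hgiv, hv'] at hc
    have h0 := congrFun hc 0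
    have h1 := congrFun hc 1
    have h2 := congrFun hc 2
    simp only [Fin.sum_univ_three, Matrix.cons_val_zero,
      Matrix.cons_val_one, Matrix.head_cons, Matrix.cons_val_two, Matrix.tail_cons,
      Pi.add_apply, Pi.smul_apply, smul_eq_mul, Pi.zero_apply] at h0 h1 h2
    push_cast at h0 h1 h2
    have hc0 : c 0 = 0 := by linarith
    have hc1 : c 1 = 0 := by linarith
    have hc2 : c 2 = 0 := by linarith
    intro i
    fin_cases i
    · exact hc0
    · exact hc1
    · exact hc2
end
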